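/- There is no multiset of five integers e_1 ≤ … ≤ e_5 with each e_i ≥ 2 satisfying ∑_{i=1}^5 (1 - 1/e_i) = 3 unless e_1 = e_2 = 2 and (e_3,e_4,e_5) is one of the triples (2,2,n) for some n, (2,3,3), (2,3,4), (2,3,5), (3,3,3), (2,4,4), or (2,3,6). -/
import Mathlib


/-- There is no multiset of five integers `e_1 ≤ … ≤ e_5`, all `≥ 2`, with
`∑ (1 - 1/e_i) = 3`, unless `e_1 = e_2 = 2` and `(e_3,e_4,e_5)` is one of
`(2,2,n)`, `(2,3,3)`, `(2,3,4)`, `(2,3,5)`, `(3,3,3)`, `(2,4,4)`, `(2,3,6)`. -/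
theorem stmt1 (e : Fin 5 → ℕ) (hmono : Monotone e) (h2 : ∀ i, 2 ≤ e i)
    (hsum : ∑ i, (1 - 1 / (e i : ℚ)) = 3) :
    e 0 = 2 ∧ e 1 = 2 ∧
      ((e 2 = 2 ∧ e 3 = 2) ∨
        (e 2, e 3, e 4) = (2, 3, 3) ∨
        (e 2, e 3, e 4) = (2, 3, 4) ∨
        (e 2, e 3, e 4) = (2, 3, 5) ∨
        (e 2, e 3, e 4) = (3, 3, 3) ∨
        (e 2, e 3, e 4) = (2, 4, 4) ∨
        (e 2, e 3, e 4) = (2, 3, 6)) := by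
  have hpos : ∀ i : Fin 5, (0:ℚ) < (e i : ℚ) := fun i => by
    have := h2 i; positivity
  have hinv : ∀ i j : Fin 5, i ≤ j → ((e j : ℚ))⁻¹ ≤ ((e i : ℚ))⁻¹ := by
    intro i j hij
    apply inv_anti₀ (hpos i)
    exact_mod_cast hmono hij
  have key : ((e 0:ℚ))⁻¹ + ((e 1:ℚ))⁻¹ + ((e 2:ℚ))⁻¹ + ((e 3:ℚ))⁻¹ + ((e 4:ℚ))⁻¹ = 2 := by
    rw [Fin.sum_univ_five] at hsum
    have h0 := (hpos 0).ne'
    have h1 := (hpos 1).ne'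
    have h2' := (hpos 2).ne'
    have h3 := (hpos 3).ne'
    have h4 := (hpos 4).ne'
    field_simp at hsum ⊢
    linarith [hsum]
  -- helper to turn 2 ≤ k * (e i)⁻¹ into bounds
  have bound : ∀ (i : Fin 5) (c k : ℚ), c ≤ k * ((e i:ℚ))⁻¹ → c * (e i:ℚ) ≤ k := by
    intro i c k h
    have h0 := hpos i
    have := mul_le_mul_of_nonneg_right h (le_of_lt h0)
    rwa [mul_assoc, inv_mul_cancel₀ h0.ne', mul_one] at this
  -- e 0 = 2
  have he0 : e 0 = 2 := by
    have hb : (2:ℚ) ≤ 5 * ((e 0:ℚ))⁻¹ := by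
      have l1 := hinv 0 1 (by decide)
      have l2 := hinv 0 2 (by decide)
      have l3 := hinv 0 3 (by decide)
      have l4 := hinv 0 4 (by decide)
      linarith
    have := bound 0 2 5 hb
    have hlt : (e 0:ℚ) < 3 := by linarith
    have : e 0 < 3 := by exact_mod_cast hlt
    have := h2 0
    omega
  -- e 1 = 2
  have he1 : e 1 = 2 := by
    have hb : (3/2:ℚ) ≤ 4 * ((e 1:ℚ))⁻¹ := by
      have l2 := hinv 1 2 (by decide)
      have l3 := hinv 1 3 (by decide)
      have l4 := hinv 1 4 (by decide)
      have : ((e 0:ℚ))⁻¹ = 1/2 := by rw [he0]; norm_num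
      linarith
    have := bound 1 (3/2) 4 hb
    have hlt : (e 1:ℚ) < 3 := by linarith
    have : e 1 < 3 := by exact_mod_cast hlt
    have := h2 1
    omega
  have key3 : ((e 2:ℚ))⁻¹ + ((e 3:ℚ))⁻¹ + ((e 4:ℚ))⁻¹ = 1 := by
    rw [he0, he1] at key
    norm_num at key
    linarith
  refine ⟨he0, he1, ?_⟩
  -- e 2 ≤ 3
  have he2 : e 2 ≤ 3 := by
    have hb : (1:ℚ) ≤ 3 * ((e 2:ℚ))⁻¹ := by
      have l3 := hinv 2 3 (by decide)
      have l4 := hinv 2 4 (by decide)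
      linarith
    have := bound 2 1 3 hb
    have hlt : (e 2:ℚ) < 4 := by linarith
    have : e 2 < 4 := by exact_mod_cast hlt
    omega
  have he2' := h2 2
  have castval : ∀ (i : Fin 5) (n : ℕ), ((e i:ℚ))⁻¹ = ((n:ℚ))⁻¹ → 0 < n → e i = n := by
    intro i n h hn
    have : (e i : ℚ) = (n : ℚ) := by
      have := inv_injective h
      exact_mod_cast this
    exact_mod_cast this
  interval_cases h3 : e 2
  · -- e 2 = 2 : 1/e3 + 1/e4 = 1/2
    have key2 : ((e 3:ℚ))⁻¹ + ((e 4:ℚ))⁻¹ = 1/2 := by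
      push_cast at key3; norm_num at key3; linarith
    have he3 : e 3 ≤ 4 := by
      have hb : (1/2:ℚ) ≤ 2 * ((e 3:ℚ))⁻¹ := by
        have l4 := hinv 3 4 (by decide)
        linarith
      have := bound 3 (1/2) 2 hb
      have hlt : (e 3:ℚ) < 5 := by linarith
      have : e 3 < 5 := by exact_mod_cast hlt
      omega
    have he3' := h2 3
    interval_cases h4 : e 3
    · -- e 3 = 2 : impossible, 1/e4 = 0
      exfalso
      push_cast at key2
      norm_num at key2
      have := hpos 4
      rw [key2] at this
      simp at this
    · -- e 3 = 3 ⇒ e 4 = 6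
      have : ((e 4:ℚ))⁻¹ = ((6:ℕ):ℚ)⁻¹ := by
        push_cast at key2 ⊢; norm_num at key2 ⊢; linarith
      have h5 := castval 4 6 this (by norm_num)
      right; right; right; right; right; right
      simp [h3, h4, h5]
    · -- e 3 = 4 ⇒ e 4 = 4
      have : ((e 4:ℚ))⁻¹ = ((4:ℕ):ℚ)⁻¹ := by
        push_cast at key2 ⊢; norm_num at key2 ⊢; linarith
      have h5 := castval 4 4 this (by norm_num)
      right; right; right; right; right; left
      simp [h3, h4, h5]
  · -- e 2 = 3 : 1/e3+1/e4 = 2/3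
    have key2 : ((e 3:ℚ))⁻¹ + ((e 4:ℚ))⁻¹ = 2/3 := by
      push_cast at key3; norm_num at key3; linarith
    have he3 : e 3 ≤ 3 := by
      have hb : (2/3:ℚ) ≤ 2 * ((e 3:ℚ))⁻¹ := by
        have l4 := hinv 3 4 (by decide)
        linarith
      have := bound 3 (2/3) 2 hb
      have hlt : (e 3:ℚ) < 4 := by linarith
      have : e 3 < 4 := by exact_mod_cast hlt
      omega
    have he3l : 3 ≤ e 3 := hmono (show (2:Fin 5) ≤ 3 by decide) |>.trans' (by omega)
    have h4 : e 3 = 3 := le_antisymm he3 (by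
      have := hmono (show (2:Fin 5) ≤ 3 by decide); omega)
    have : ((e 4:ℚ))⁻¹ = ((3:ℕ):ℚ)⁻¹ := by
      rw [h4] at key2; push_cast at key2 ⊢; norm_num at key2 ⊢; linarith
    have h5 := castval 4 3 this (by norm_num)
    right; right; right; right; left
    simp [h3, h4, h5]
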